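/- arXiv:math/0610161 — 4 statements merged into one kernel-verified Lean document; each statement's English description precedes it below -/
import Mathlib

section
/- Let q ≥ 3 be a prime power. A subgroup U of U_n(𝔽_q) is a pattern group (that is, U = U_J for some closed set J ⊆ {(i,j) : 1 ≤ i < j ≤ n}) if and only if U is invariant under conjugation by every invertible diagonal matrix in GL_n(𝔽_q). -/
open Matrix BigOperators

namespace SCT

/-- Pairs of indices. -/
abbrev Pr (n : ℕ) := Fin n × Fin n

/-- A closed subset `J ⊆ {(i,j) : i < j}`:  `(i,j) ∈ J` and `(j,k) ∈ J` imply `(i,k) ∈ J`. -/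
def Closed {n : ℕ} (J : Finset (Pr n)) : Prop :=
  (∀ p ∈ J, p.1 < p.2) ∧
  ∀ i j k : Fin n, (i, j) ∈ J → (j, k) ∈ J → (i, k) ∈ J

variable {F : Type*} [Field F] [Fintype F] [DecidableEq F] {n : ℕ}

/-- `X_φ = Σ_{(i,j) ∈ J} φ_{ij} X_{ij}`. -/
def Xmat (J : Finset (Pr n)) (φ : Pr n → F) : Matrix (Fin n) (Fin n) F :=
  Matrix.of fun i j => if (i, j) ∈ J then φ (i, j) else 0

/-- `x_φ = 1 + X_φ`. -/
def xmat (J : Finset (Pr n)) (φ : Pr n → F) : Matrix (Fin n) (Fin n) F :=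
  1 + Xmat J φ

/-- `x_{ij}(t) = 1 + t X_{ij}`. -/
def xelt (i j : Fin n) (t : F) : Matrix (Fin n) (Fin n) F :=
  1 + Matrix.single i j t

/-- The pattern group `U_J`, as a set of matrices: ones on the diagonal, entries off the
diagonal vanish outside `J`. -/
def UJ (J : Finset (Pr n)) : Set (Matrix (Fin n) (Fin n) F) :=
  {M | (∀ i, M i i = 1) ∧ ∀ i j : Fin n, i ≠ j → (i, j) ∉ J → M i j = 0}

/-- `𝔫_J`: matrices supported on `J`. -/
def nJset (J : Finset (Pr n)) : Set (Matrix (Fin n) (Fin n) F) :=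
  {M | ∀ i j : Fin n, (i, j) ∉ J → M i j = 0}

/-- The functional `λ_η` evaluated at a matrix of `𝔫_J`. -/
def lam (J : Finset (Pr n)) (η : Pr n → F) (X : Matrix (Fin n) (Fin n) F) : F :=
  ∑ p ∈ J, η p * X p.1 p.2

/-- A functional with coefficients indexed by `J` evaluated at a matrix. -/
def lamSub (J : Finset (Pr n)) (η : {p // p ∈ J} → F) (X : Matrix (Fin n) (Fin n) F) : F :=
  ∑ p ∈ J.attach, η p * X p.1.1 p.1.2

/-- The two-sided orbit `O_φ = U_J X_φ U_J ⊆ 𝔫_J`. -/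
def biOrbit (J : Finset (Pr n)) (φ : Pr n → F) : Set (Matrix (Fin n) (Fin n) F) :=
  {Y | ∃ u v : Matrix (Fin n) (Fin n) F, u ∈ UJ J ∧ v ∈ UJ J ∧ Y = u * Xmat J φ * v}

/-- `(M_φ^R)_{(i,l),(j,k)} = φ_{ij}` if `k = l` and `(i,j,l) ∈ 𝒫`, else `0`. -/
def MphiR (J : Finset (Pr n)) (φ : Pr n → F) : Matrix {p // p ∈ J} {p // p ∈ J} F :=
  Matrix.of fun p q =>
    if q.1.2 = p.1.2 ∧ (p.1.1, q.1.1) ∈ J ∧ (q.1.1, p.1.2) ∈ J then φ (p.1.1, q.1.1) else 0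

/-- `(M_φ^L)_{(i,l),(j,k)} = φ_{kl}` if `i = j` and `(i,k,l) ∈ 𝒫`, else `0`. -/
def MphiL (J : Finset (Pr n)) (φ : Pr n → F) : Matrix {p // p ∈ J} {p // p ∈ J} F :=
  Matrix.of fun p q =>
    if q.1.1 = p.1.1 ∧ (p.1.1, q.1.2) ∈ J ∧ (q.1.2, p.1.2) ∈ J then φ (q.1.2, p.1.2) else 0

/-- `(M_L^η)_{(j,k),(i,l)} = η_{ik}` if `l = j` and `(i,j,k) ∈ 𝒫`, else `0`. -/
def MetaL (J : Finset (Pr n)) (η : Pr n → F) : Matrix {p // p ∈ J} {p // p ∈ J} F :=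
  Matrix.of fun p q =>
    if q.1.2 = p.1.1 ∧ (q.1.1, p.1.1) ∈ J ∧ (p.1.1, p.1.2) ∈ J then η (q.1.1, p.1.2) else 0

/-- `(M_R^η)_{(j,k),(i,l)} = η_{jl}` if `k = i` and `(j,k,l) ∈ 𝒫`, else `0`. -/
def MetaR (J : Finset (Pr n)) (η : Pr n → F) : Matrix {p // p ∈ J} {p // p ∈ J} F :=
  Matrix.of fun p q =>
    if q.1.1 = p.1.2 ∧ (p.1.1, p.1.2) ∈ J ∧ (p.1.2, q.1.2) ∈ J then η (p.1.1, q.1.2) else 0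

/-- `corank(η) = rank(M_L^η)`. -/
noncomputable def corank (J : Finset (Pr n)) (η : Pr n → F) : ℕ := (MetaL J η).rank

/-- `(M_φ^η)_{(i,j),(k,l)} = φ_{jk} η_{il}` if `(i,j,k,l) ∈ 𝒫`, else `0`. -/
def Mmesh (J : Finset (Pr n)) (φ η : Pr n → F) : Matrix {p // p ∈ J} {p // p ∈ J} F :=
  Matrix.of fun p q =>
    if (p.1.2, q.1.1) ∈ J then φ (p.1.2, q.1.1) * η (p.1.1, q.1.2) else 0

/-- `(a_φ^η)_{(i,j)} = Σ_{(i,j,k) ∈ 𝒫} φ_{jk} η_{ik}`. -/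
def aVec (J : Finset (Pr n)) (φ η : Pr n → F) : {p // p ∈ J} → F :=
  fun p => ∑ k : Fin n, if (p.1.2, k) ∈ J then φ (p.1.2, k) * η (p.1.1, k) else 0

/-- `(b_φ^η)_{(j,k)} = Σ_{(i,j,k) ∈ 𝒫} φ_{ij} η_{ik}`. -/
def bVec (J : Finset (Pr n)) (φ η : Pr n → F) : {p // p ∈ J} → F :=
  fun p => ∑ i : Fin n, if (i, p.1.1) ∈ J then φ (i, p.1.1) * η (i, p.1.2) else 0

/-- `φ` meshes with `η`. -/
def Meshes (J : Finset (Pr n)) (φ η : Pr n → F) : Prop :=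
  (∃ b : {p // p ∈ J} → F, (Mmesh J φ η).mulVec b = -aVec J φ η) ∧
  ∀ v : {p // p ∈ J} → F, (Mmesh J φ η).mulVec v = 0 → bVec J φ η ⬝ᵥ v = 0

/-- The supercharacter `χ^η` evaluated at `x_φ`. -/
noncomputable def superchar (J : Finset (Pr n)) (θ : AddChar F ℂ) (η φ : Pr n → F) : ℂ :=
  ((Fintype.card F : ℂ) ^ corank J η / (Nat.card (biOrbit J φ) : ℂ)) *
    ∑ᶠ Y ∈ biOrbit J φ, (starRingEnd ℂ) (θ (lam J η Y))

/-- `χ` restricted to `U` is the character of an irreducible complex representation of `U`. -/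
def IsIrredCharOn (U : Set (Matrix (Fin n) (Fin n) F))
    (χ : Matrix (Fin n) (Fin n) F → ℂ) : Prop :=
  ∃ d : ℕ, 0 < d ∧ ∃ ρ : Matrix (Fin n) (Fin n) F → Matrix (Fin d) (Fin d) ℂ,
    ρ 1 = 1 ∧
    (∀ A ∈ U, ∀ B ∈ U, ρ (A * B) = ρ A * ρ B) ∧
    (∀ W : Submodule ℂ (Fin d → ℂ), (∀ A ∈ U, ∀ w ∈ W, (ρ A).mulVec w ∈ W) → W = ⊥ ∨ W = ⊤) ∧
    ∀ A ∈ U, (ρ A).trace = χ A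

/-- The full set of positive roots. -/
def Jfull (n : ℕ) : Finset (Pr n) := Finset.univ.filter fun p : Pr n => p.1 < p.2

/-!  The total order and partial sum on positive roots. -/

/-- `α < β` in the total order: `(r,s) < (i,j)` iff `r > i`, or `r = i` and `s > j`. -/
def rlt {n : ℕ} (a b : Pr n) : Prop := b.1 < a.1 ∨ (a.1 = b.1 ∧ b.2 < a.2)

/-- `α + β` is defined in `R⁺`. -/
def rdef {n : ℕ} (a b : Pr n) : Prop := a.2 = b.1 ∨ b.2 = a.1

/-- The sum `α + β` (when defined). -/
def rsum {n : ℕ} (a b : Pr n) : Pr n := if a.2 = b.1 then (a.1, b.2) else (b.1, a.2)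

/-! Algebra groups. -/

/-- The algebra group `H = 1 + 𝔫`. -/
def algH (nn : Submodule F (Matrix (Fin n) (Fin n) F)) : Set (Matrix (Fin n) (Fin n) F) :=
  {M | ∃ X ∈ nn, M = 1 + X}

/-- The two sided orbit `H X H ⊆ 𝔫` of `X`. -/
def algBiOrbit (nn : Submodule F (Matrix (Fin n) (Fin n) F))
    (X : Matrix (Fin n) (Fin n) F) : Set nn :=
  {Y | ∃ u ∈ algH nn, ∃ v ∈ algH nn, (Y : Matrix (Fin n) (Fin n) F) = u * X * v}

/-- The right orbit `{λ · u : u ∈ H} ⊆ 𝔫*` of a functional `λ`, described via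
`λ' = λ · u⁻¹ ↔ (∀ Y, λ' Y = λ (Y u))`. -/
def algRightOrbit (nn : Submodule F (Matrix (Fin n) (Fin n) F))
    (l : Module.Dual F nn) : Set (Module.Dual F nn) :=
  {l' | ∃ u ∈ algH nn, ∀ (Y : nn) (h : (Y : Matrix (Fin n) (Fin n) F) * u ∈ nn),
      l' Y = l ⟨(Y : Matrix (Fin n) (Fin n) F) * u, h⟩}

/-- The supercharacter `χ^λ` of an algebra group, evaluated at `1 + X`. -/
noncomputable def algSuperchar (nn : Submodule F (Matrix (Fin n) (Fin n) F))
    (θ : AddChar F ℂ) (l : Module.Dual F nn) (X : Matrix (Fin n) (Fin n) F) : ℂ :=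
  ((Nat.card (algRightOrbit nn l) : ℂ) / (Nat.card (algBiOrbit nn X) : ℂ)) *
    ∑ᶠ Y ∈ algBiOrbit nn X, (starRingEnd ℂ) (θ (l Y))

/-! Algebra groups with a fixed basis `X_1, …, X_d` of `𝔫`. -/

/-- `X_ρ = Σ_i ρ_i X_i`. -/
def bigX {d : ℕ} (Xb : Fin d → Matrix (Fin n) (Fin n) F) (ρ : Fin d → F) :
    Matrix (Fin n) (Fin n) F :=
  ∑ i : Fin d, ρ i • Xb i

/-- The two-sided orbit of `X_φ`, in coordinates. -/
def algCoeffBiOrbit {d : ℕ} (Xb : Fin d → Matrix (Fin n) (Fin n) F) (φ : Fin d → F) :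
    Set (Fin d → F) :=
  {ρ | ∃ ζ₁ ζ₂ : Fin d → F,
      (1 + bigX Xb ζ₁) * bigX Xb φ * (1 + bigX Xb ζ₂) = bigX Xb ρ}

/-- The right orbit of `λ_η`, in coordinates (`λ_η(X_ν) = η ⬝ᵥ ν`). -/
def algCoeffRightOrbit {d : ℕ} (Xb : Fin d → Matrix (Fin n) (Fin n) F) (η : Fin d → F) :
    Set (Fin d → F) :=
  {η' | ∃ ζ : Fin d → F, ∀ ρ ν : Fin d → F,
      bigX Xb ρ * (1 + bigX Xb ζ) = bigX Xb ν → η' ⬝ᵥ ρ = η ⬝ᵥ ν}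

/-- The supercharacter `χ^η` of an algebra group with fixed basis, evaluated at `x_φ`. -/
noncomputable def algCoeffSuperchar {d : ℕ} (Xb : Fin d → Matrix (Fin n) (Fin n) F)
    (θ : AddChar F ℂ) (η φ : Fin d → F) : ℂ :=
  ((Nat.card (algCoeffRightOrbit Xb η) : ℂ) / (Nat.card (algCoeffBiOrbit Xb φ) : ℂ)) *
    ∑ᶠ ρ ∈ algCoeffBiOrbit Xb φ, (starRingEnd ℂ) (θ (η ⬝ᵥ ρ))

/-- `(C_i)_{jk} = c_{ij}^k`. -/
def Cleft {d : ℕ} (c : Fin d → Fin d → Fin d → F) (i : Fin d) : Matrix (Fin d) (Fin d) F :=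
  Matrix.of fun j k => c i j k

/-- `(C^j)_{ik} = c_{ij}^k`. -/
def Cright {d : ℕ} (c : Fin d → Fin d → Fin d → F) (j : Fin d) : Matrix (Fin d) (Fin d) F :=
  Matrix.of fun i k => c i j k

/-- `(M_φ^η)_{ij} = φ C_i C^j η`. -/
def algMmesh {d : ℕ} (c : Fin d → Fin d → Fin d → F) (φ η : Fin d → F) :
    Matrix (Fin d) (Fin d) F :=
  Matrix.of fun i j => φ ⬝ᵥ (Cleft c i * Cright c j).mulVec η

/-- `(a_φ^η)_i = φ C_i η`. -/
def algAVec {d : ℕ} (c : Fin d → Fin d → Fin d → F) (φ η : Fin d → F) : Fin d → F :=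
  fun i => φ ⬝ᵥ (Cleft c i).mulVec η

/-- `(b_φ^η)_j = φ C^j η`. -/
def algBVec {d : ℕ} (c : Fin d → Fin d → Fin d → F) (φ η : Fin d → F) : Fin d → F :=
  fun j => φ ⬝ᵥ (Cright c j).mulVec η

/-- `φ` meshes with `η` (algebra-group version). -/
def algMeshes {d : ℕ} (c : Fin d → Fin d → Fin d → F) (φ η : Fin d → F) : Prop :=
  (∃ b : Fin d → F, (algMmesh c φ η).mulVec b = -algAVec c φ η) ∧
  ∀ v : Fin d → F, (algMmesh c φ η).mulVec v = 0 → algBVec c φ η ⬝ᵥ v = 0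

end SCT

/-!
Torus stability forces root subgroups into `U`. Fix `c ∈ 𝔽_qˣ` with `c ≠ 1` (this is where
`q ≥ 3` enters) and let `d_i` be the diagonal matrix with `c` in place `i` and `1` elsewhere.
If `A ∈ U` has `i`-th column `e_i`, then `d_i A⁻¹ d_i⁻¹ A = 1 + (c - 1) E_ii (1 - A)` lies in `U`
and differs from `1` only in row `i`; the same manipulation with `d_j` cuts this row down to
its `(i, j)` entry, giving `x_ij((c - 1)(c⁻¹ - 1) A_ij) ∈ U`, and conjugating by the torus then
gives the whole root subgroup `x_ij(𝔽_q)` when `A_ij ≠ 0`. For a unitriangular `A`, an entry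
`A_ij ≠ 0` in the leftmost column with a nonzero off-diagonal entry has this column property, and
`A x_ij(-A_ij)` clears it, so induction on the number of nonzero off-diagonal entries shows:
every nonzero entry of an element of `U` gives a root subgroup inside `U`, and every element of
`U_J` is a product of root elements of `J`. Thus `U = U_J` for the set `J` of roots whose
subgroup lies in `U`, and `J` is closed because `[x_ij(s), x_jk(t)] = x_ik(st)`.
-/

namespace SCT

section RingIdentities

variable {R : Type*} [Ring R] {a a' d e : R}

theorem mul_mul_mul_eq_one_add_of_mul_sub_one (ha : a' * a = 1) (hd : d * e = 1)
    (hcol : a * (e - 1) = e - 1) :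
    d * a' * e * a = 1 + (d - 1) * (1 - a) := by
  have h : a' * (e - 1) = e - 1 := by conv_lhs => rw [← hcol, ← mul_assoc, ha, one_mul]
  calc d * a' * e * a = d * (a' * a) + d * (a' * (e - 1)) * a := by noncomm_ring
    _ = d + (d * e - d) * a := by rw [ha, h]; noncomm_ring
    _ = 1 + (d - 1) * (1 - a) := by rw [hd]; noncomm_ring

theorem mul_mul_mul_eq_one_add_of_sub_one_mul (ha : a * a' = 1) (hd : e * d = 1)
    (hrow : (e - 1) * a = e - 1) :
    a * e * a' * d = 1 + (1 - a) * (d - 1) := by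
  have h : (e - 1) * a' = e - 1 := by conv_lhs => rw [← hrow, mul_assoc, ha, mul_one]
  calc a * e * a' * d = (a * a') * d + a * ((e - 1) * a') * d := by noncomm_ring
    _ = d + a * (e * d - d) := by rw [ha, h]; noncomm_ring
    _ = 1 + (1 - a) * (d - 1) := by rw [hd]; noncomm_ring

end RingIdentities

variable {F : Type*} [Field F] {n : ℕ}

def TorusStable (U : Set (Matrix (Fin n) (Fin n) F)) : Prop :=
  ∀ (d : Fin n → Fˣ) (A : Matrix (Fin n) (Fin n) F), A ∈ U →
    diagonal (fun i => (d i : F)) * A * diagonal (fun i => ((d i)⁻¹ : F)) ∈ U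

theorem torusStable_UJ (J : Finset (Pr n)) :
    TorusStable (UJ J : Set (Matrix (Fin n) (Fin n) F)) := by
  rintro d A ⟨hdiag, hoff⟩
  refine ⟨fun k => ?_, fun k l hkl hkl' => ?_⟩
  · simp [mul_diagonal, diagonal_mul, hdiag k]
  · simp [mul_diagonal, diagonal_mul, hoff k l hkl hkl']

theorem diagonal_units_mul_diagonal_inv (u : Fin n → Fˣ) :
    diagonal (fun i => (u i : F)) * diagonal (fun i => ((u i)⁻¹ : F)) = 1 := by
  simp [diagonal_mul_diagonal]

theorem diagonal_sub_one_eq_single {f : Fin n → F} {i : Fin n} (hf : ∀ k ≠ i, f k = 1) :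
    diagonal f - 1 = single i i (f i - 1) := by
  have hf' : f - 1 = Pi.single i (f i - 1) := by
    ext k
    by_cases hki : k = i
    · subst hki; simp
    · simp [hf k hki, hki]
  calc diagonal f - 1 = diagonal (f - 1) := by rw [← diagonal_one, diagonal_sub]; rfl
    _ = single i i (f i - 1) := by rw [hf', diagonal_single]

theorem mul_single_of_col_eq_one {M : Matrix (Fin n) (Fin n) F} {i : Fin n}
    (hM : ∀ k, M k i = (1 : Matrix (Fin n) (Fin n) F) k i) (j : Fin n) (s : F) :
    M * single i j s = single i j s := by
  ext k l
  by_cases hl : l = j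
  · subst hl
    simp [hM k, one_apply, single_apply, eq_comm]
  · simp [hl, single_apply_of_ne, Ne.symm]

theorem mul_xelt_of_col_eq_one {M : Matrix (Fin n) (Fin n) F} {i : Fin n}
    (hM : ∀ k, M k i = (1 : Matrix (Fin n) (Fin n) F) k i) (j : Fin n) (s : F) :
    M * xelt i j s = M + single i j s := by
  rw [xelt, mul_add, mul_one, mul_single_of_col_eq_one hM]

theorem xelt_zero (i j : Fin n) : xelt i j (0 : F) = 1 := by
  rw [xelt, single_zero, add_zero]

theorem diagonal_mul_xelt_mul_diagonal (u : Fin n → Fˣ) (i j : Fin n) (s : F) :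
    diagonal (fun k => (u k : F)) * xelt i j s * diagonal (fun k => ((u k)⁻¹ : F)) =
      xelt i j (u i * s * (u j)⁻¹) := by
  rw [xelt, mul_add, add_mul, mul_one, diagonal_units_mul_diagonal_inv, xelt]
  congr 1
  ext k l
  by_cases h : i = k ∧ j = l
  · obtain ⟨rfl, rfl⟩ := h
    simp [mul_diagonal]
  · simp [h]

theorem xelt_commutator {i j k : Fin n} (hij : i ≠ j) (hjk : j ≠ k) (hik : i ≠ k) (s t : F) :
    xelt i j s * xelt j k t * xelt i j (-s) * xelt j k (-t) = xelt i k (s * t) := by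
  simp only [xelt, mul_add, add_mul, one_mul, mul_one, single_mul_single_same,
    single_mul_single_of_ne, hij.symm, hjk.symm, hik.symm, ne_eq, not_false_eq_true,
    add_zero, neg_mul, mul_neg, ← single_neg]
  abel

theorem add_single_neg_apply (M : Matrix (Fin n) (Fin n) F) (i j k l : Fin n) :
    (M + single i j (-M i j)) k l = if i = k ∧ j = l then 0 else M k l := by
  by_cases h : i = k ∧ j = l
  · obtain ⟨rfl, rfl⟩ := h
    simp
  · simp [h]

theorem add_single_neg_mem_UJ {J : Finset (Pr n)} {M : Matrix (Fin n) (Fin n) F} (hM : M ∈ UJ J)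
    {i j : Fin n} (hij : i ≠ j) : M + single i j (-M i j) ∈ UJ J := by
  refine ⟨fun k => ?_, fun k l hkl hJ => ?_⟩
  · rw [add_single_neg_apply, if_neg (fun h => hij (h.1.trans h.2.symm)), hM.1]
  · rw [add_single_neg_apply, hM.2 k l hkl hJ, ite_self]

theorem UJ_subset_UJ_Jfull {J : Finset (Pr n)} (hJ : ∀ p ∈ J, p.1 < p.2) :
    (UJ J : Set (Matrix (Fin n) (Fin n) F)) ⊆ UJ (Jfull n) :=
  fun _ hM => ⟨hM.1, fun k l hkl hkl' =>
    hM.2 k l hkl fun h => hkl' (by simpa [Jfull] using hJ _ h)⟩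

open Classical in
noncomputable def offDiagSupport (M : Matrix (Fin n) (Fin n) F) : Finset (Pr n) :=
  Finset.univ.filter fun p => p.1 ≠ p.2 ∧ M p.1 p.2 ≠ 0

theorem mem_offDiagSupport {M : Matrix (Fin n) (Fin n) F} {p : Pr n} :
    p ∈ offDiagSupport M ↔ p.1 ≠ p.2 ∧ M p.1 p.2 ≠ 0 := by
  simp [offDiagSupport]

theorem offDiagSupport_add_single_neg (M : Matrix (Fin n) (Fin n) F) (i j : Fin n) :
    offDiagSupport (M + single i j (-M i j)) = (offDiagSupport M).erase (i, j) := by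
  ext ⟨k, l⟩
  simp only [mem_offDiagSupport, Finset.mem_erase, add_single_neg_apply]
  by_cases h : i = k ∧ j = l
  · obtain ⟨rfl, rfl⟩ := h
    simp
  · simp [h, Prod.ext_iff, eq_comm]

theorem eq_one_of_offDiagSupport_eq_empty {M : Matrix (Fin n) (Fin n) F} (hM : ∀ i, M i i = 1)
    (h : offDiagSupport M = ∅) : M = 1 := by
  ext k l
  by_cases hkl : k = l
  · subst hkl
    rw [hM, one_apply_eq]
  · rw [one_apply_ne hkl]
    by_contra hMkl
    simpa [h] using (mem_offDiagSupport (p := (k, l))).mpr ⟨hkl, hMkl⟩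

theorem exists_col_eq_one_of_offDiagSupport_nonempty {M : Matrix (Fin n) (Fin n) F}
    (hM : M ∈ UJ (Jfull n)) (h : (offDiagSupport M).Nonempty) :
    ∃ i j, i < j ∧ (∀ k, M k i = (1 : Matrix (Fin n) (Fin n) F) k i) ∧ M i j ≠ 0 := by
  obtain ⟨⟨i, j⟩, hp, hmin⟩ := (offDiagSupport M).exists_min_image Prod.snd h
  obtain ⟨hij, hMij⟩ := mem_offDiagSupport.mp hp
  have hlt : i < j := by
    by_contra h
    exact hMij (hM.2 i j hij (by simpa [Jfull] using h))
  refine ⟨i, j, hlt, fun k => ?_, hMij⟩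
  by_cases hki : k = i
  · subst hki
    rw [hM.1, one_apply_eq]
  · rw [one_apply_ne hki]
    by_contra hMki
    exact (hmin (k, i) (mem_offDiagSupport.mpr ⟨hki, hMki⟩)).not_gt hlt

theorem UJ_Jfull_induction {P : Matrix (Fin n) (Fin n) F → Prop} (one : P 1)
    (step : ∀ M ∈ UJ (Jfull n), ∀ i j, i < j →
      (∀ k, M k i = (1 : Matrix (Fin n) (Fin n) F) k i) → M i j ≠ 0 →
      P (M + single i j (-M i j)) → P M) :
    ∀ M ∈ UJ (Jfull n), P M := by
  intro M hM
  induction hN : (offDiagSupport M).card using Nat.strong_induction_on generalizing M with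
  | _ N ih =>
  rcases (offDiagSupport M).eq_empty_or_nonempty with h | h
  · rwa [eq_one_of_offDiagSupport_eq_empty hM.1 h]
  · obtain ⟨i, j, hij, hcol, hMij⟩ := exists_col_eq_one_of_offDiagSupport_nonempty hM h
    refine step M hM i j hij hcol hMij (ih _ ?_ _ (add_single_neg_mem_UJ hM hij.ne) rfl)
    rw [← hN, offDiagSupport_add_single_neg]
    exact Finset.card_erase_lt_of_mem (mem_offDiagSupport.mpr ⟨hij.ne, hMij⟩)

theorem exists_units_ne_one {G₀ : Type*} [GroupWithZero G₀] [Fintype G₀]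
    (h : 3 ≤ Fintype.card G₀) : ∃ c : G₀ˣ, c ≠ 1 := by
  classical
  exact Fintype.exists_ne_of_one_lt_card (by rw [Fintype.card_units]; omega) 1

open Classical in
noncomputable def rootPairs (U : Set (Matrix (Fin n) (Fin n) F)) : Finset (Pr n) :=
  (Jfull n).filter fun p => ∀ t, xelt p.1 p.2 t ∈ U

theorem mem_rootPairs {U : Set (Matrix (Fin n) (Fin n) F)} {p : Pr n} :
    p ∈ rootPairs U ↔ p.1 < p.2 ∧ ∀ t, xelt p.1 p.2 t ∈ U := by
  simp [rootPairs, Jfull]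

section TorusStableSubmonoid

variable {S : Submonoid (Matrix (Fin n) (Fin n) F)}

theorem diagonal_mulSingle_sub_one (i : Fin n) (c : Fˣ) :
    diagonal (fun k => ((Pi.mulSingle i c : Fin n → Fˣ) k : F)) - 1 =
      single i i ((c : F) - 1) := by
  rw [diagonal_sub_one_eq_single (i := i) fun k hk => by simp [Pi.mulSingle_eq_of_ne hk],
    Pi.mulSingle_eq_same]

theorem diagonal_mulSingle_inv_sub_one (i : Fin n) (c : Fˣ) :
    diagonal (fun k => ((Pi.mulSingle i c : Fin n → Fˣ) k : F)⁻¹) - 1 =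
      single i i ((c : F)⁻¹ - 1) := by
  rw [diagonal_sub_one_eq_single (i := i) fun k hk => by simp [Pi.mulSingle_eq_of_ne hk],
    Pi.mulSingle_eq_same]

theorem xelt_mem_of_col_eq_one (hinv : ∀ A ∈ S, ∃ B ∈ S, A * B = 1)
    (hT : TorusStable (S : Set (Matrix (Fin n) (Fin n) F))) (c : Fˣ)
    {A : Matrix (Fin n) (Fin n) F} (hA : A ∈ S) {i j : Fin n} (hij : i ≠ j)
    (hcol : ∀ k, A k i = (1 : Matrix (Fin n) (Fin n) F) k i) :
    xelt i j (((c : F) - 1) * ((c : F)⁻¹ - 1) * A i j) ∈ S := by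
  obtain ⟨A', hA', hAA'⟩ := hinv A hA
  set B := 1 + single i i ((c : F) - 1) * (1 - A) with hB_def
  have hB : B ∈ S := by
    have h := S.mul_mem (hT (Pi.mulSingle i c) A' hA') hA
    have hfix : A * (diagonal (fun k => ((Pi.mulSingle i c : Fin n → Fˣ) k : F)⁻¹) - 1) =
        diagonal (fun k => ((Pi.mulSingle i c : Fin n → Fˣ) k : F)⁻¹) - 1 := by
      rw [diagonal_mulSingle_inv_sub_one, mul_single_of_col_eq_one hcol]
    have hB_eq := mul_mul_mul_eq_one_add_of_mul_sub_one (mul_eq_one_comm.mp hAA')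
      (diagonal_units_mul_diagonal_inv (Pi.mulSingle i c)) hfix
    rw [hB_eq, diagonal_mulSingle_sub_one] at h
    exact h
  obtain ⟨B', hB', hBB'⟩ := hinv B hB
  have hrow : (diagonal (fun k => ((Pi.mulSingle j c : Fin n → Fˣ) k : F)) - 1) * B =
      diagonal (fun k => ((Pi.mulSingle j c : Fin n → Fˣ) k : F)) - 1 := by
    rw [diagonal_mulSingle_sub_one, hB_def, mul_add, mul_one, ← mul_assoc,
      single_mul_single_of_ne (h := hij.symm), zero_mul, add_zero]
  have h := S.mul_mem hB (hT (Pi.mulSingle j c) B' hB')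
  have hx_eq := mul_mul_mul_eq_one_add_of_sub_one_mul hBB'
    (diagonal_units_mul_diagonal_inv (Pi.mulSingle j c)) hrow
  rw [← mul_assoc, ← mul_assoc, hx_eq, diagonal_mulSingle_inv_sub_one] at h
  convert h using 1
  rw [xelt, hB_def, sub_add_cancel_left, neg_mul, single_mul_mul_single, Matrix.sub_apply,
    one_apply_ne hij, zero_sub, single_neg]
  ring_nf

theorem xelt_mem_of_xelt_mem (hT : TorusStable (S : Set (Matrix (Fin n) (Fin n) F)))
    {i j : Fin n} (hij : i ≠ j) {s : F} (hs : s ≠ 0) (h : xelt i j s ∈ S) (t : F) :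
    xelt i j t ∈ S := by
  rcases eq_or_ne t 0 with rfl | ht
  · rw [xelt_zero]; exact S.one_mem
  · have h' := hT (Pi.mulSingle i (Units.mk0 (t / s) (div_ne_zero ht hs))) _ h
    simpa [diagonal_mul_xelt_mul_diagonal, Pi.mulSingle_eq_of_ne hij.symm, div_mul_cancel₀ _ hs]
      using h'

theorem forall_xelt_mem_of_col_eq_one (hinv : ∀ A ∈ S, ∃ B ∈ S, A * B = 1)
    (hT : TorusStable (S : Set (Matrix (Fin n) (Fin n) F))) {c : Fˣ} (hc : c ≠ 1)
    {A : Matrix (Fin n) (Fin n) F} (hA : A ∈ S) {i j : Fin n} (hij : i ≠ j)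
    (hcol : ∀ k, A k i = (1 : Matrix (Fin n) (Fin n) F) k i) (hAij : A i j ≠ 0) (t : F) :
    xelt i j t ∈ S := by
  have hc' : (c : F) ≠ 1 := fun h => hc (Units.val_eq_one.mp h)
  refine xelt_mem_of_xelt_mem hT hij ?_ (xelt_mem_of_col_eq_one hinv hT c hA hij hcol) t
  refine mul_ne_zero (mul_ne_zero (sub_ne_zero.mpr hc') (sub_ne_zero.mpr ?_)) hAij
  exact fun h => hc' (inv_eq_one.mp h)

theorem forall_xelt_mem_of_apply_ne_zero
    (hsub : (S : Set (Matrix (Fin n) (Fin n) F)) ⊆ UJ (Jfull n))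
    (hinv : ∀ A ∈ S, ∃ B ∈ S, A * B = 1)
    (hT : TorusStable (S : Set (Matrix (Fin n) (Fin n) F))) {c : Fˣ} (hc : c ≠ 1)
    {A : Matrix (Fin n) (Fin n) F} (hA : A ∈ S) {k l : Fin n} (hkl : k ≠ l) (hAkl : A k l ≠ 0)
    (t : F) : xelt k l t ∈ S := by
  refine UJ_Jfull_induction
    (P := fun A => A ∈ S → ∀ {k l : Fin n}, k ≠ l → A k l ≠ 0 → xelt k l t ∈ S)
    ?_ ?_ A (hsub hA) hA hkl hAkl
  · intro _ k l hkl h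
    exact absurd (one_apply_ne hkl) h
  · intro M _ i j hij hcol hMij ih hM k l hkl hMkl
    have hroot := forall_xelt_mem_of_col_eq_one hinv hT hc hM hij.ne hcol hMij
    by_cases hp : i = k ∧ j = l
    · obtain ⟨rfl, rfl⟩ := hp
      exact hroot t
    · refine ih ?_ hkl (by rwa [add_single_neg_apply, if_neg hp])
      rw [← mul_xelt_of_col_eq_one hcol]
      exact S.mul_mem hM (hroot _)

theorem UJ_subset_of_forall_xelt_mem {J : Finset (Pr n)} (hJ : ∀ p ∈ J, p.1 < p.2)
    (hroot : ∀ p ∈ J, ∀ t, xelt p.1 p.2 t ∈ S) :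
    UJ J ⊆ (S : Set (Matrix (Fin n) (Fin n) F)) := by
  intro M hM
  refine UJ_Jfull_induction (P := fun M => M ∈ UJ J → M ∈ S) (fun _ => S.one_mem) ?_ M
    (UJ_subset_UJ_Jfull hJ hM) hM
  intro M _ i j hij hcol hMij ih hMJ
  have hJij : (i, j) ∈ J := by
    by_contra h
    exact hMij (hMJ.2 i j hij.ne h)
  have hcol' : ∀ k, (M + single i j (-M i j)) k i = (1 : Matrix (Fin n) (Fin n) F) k i := by
    intro k
    rw [add_single_neg_apply, if_neg (fun h => hij.ne' h.2), hcol]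
  have hM : M = (M + single i j (-M i j)) * xelt i j (M i j) := by
    rw [mul_xelt_of_col_eq_one hcol', add_assoc, ← single_add, neg_add_cancel, single_zero,
      add_zero]
  rw [hM]
  exact S.mul_mem (ih (add_single_neg_mem_UJ hMJ hij.ne)) (hroot _ hJij _)

theorem closed_rootPairs : Closed (rootPairs (S : Set (Matrix (Fin n) (Fin n) F))) := by
  refine ⟨fun p hp => (mem_rootPairs.mp hp).1, fun i j k hij hjk => ?_⟩
  obtain ⟨hij, hxij⟩ := mem_rootPairs.mp hij
  obtain ⟨hjk, hxjk⟩ := mem_rootPairs.mp hjk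
  refine mem_rootPairs.mpr ⟨hij.trans hjk, fun t => ?_⟩
  rw [← mul_one t, ← xelt_commutator hij.ne hjk.ne (hij.trans hjk).ne]
  exact S.mul_mem (S.mul_mem (S.mul_mem (hxij t) (hxjk 1)) (hxij _)) (hxjk _)

theorem subset_UJ_rootPairs (hsub : (S : Set (Matrix (Fin n) (Fin n) F)) ⊆ UJ (Jfull n))
    (hinv : ∀ A ∈ S, ∃ B ∈ S, A * B = 1)
    (hT : TorusStable (S : Set (Matrix (Fin n) (Fin n) F))) {c : Fˣ} (hc : c ≠ 1) :
    (S : Set (Matrix (Fin n) (Fin n) F)) ⊆ UJ (rootPairs (S : Set (Matrix (Fin n) (Fin n) F))) := by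
  intro A hA
  refine ⟨(hsub hA).1, fun k l hkl hroot => ?_⟩
  by_contra hAkl
  have hlt : k < l := by
    by_contra h
    exact hAkl ((hsub hA).2 k l hkl (by simpa [Jfull] using h))
  exact hroot (mem_rootPairs.mpr
    ⟨hlt, forall_xelt_mem_of_apply_ne_zero hsub hinv hT hc hA hkl hAkl⟩)

end TorusStableSubmonoid

theorem stmt0_general {F : Type*} [Field F] [Fintype F] {n : ℕ}
    (hq : 3 ≤ Fintype.card F)
    (U : Set (Matrix (Fin n) (Fin n) F))
    (hsub : U ⊆ UJ (Jfull n))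
    (h1 : (1 : Matrix (Fin n) (Fin n) F) ∈ U)
    (hmul : ∀ A ∈ U, ∀ B ∈ U, A * B ∈ U)
    (hinv : ∀ A ∈ U, ∃ B ∈ U, A * B = 1) :
    (∃ J : Finset (Pr n), Closed J ∧ U = UJ J) ↔
    ∀ (d : Fin n → Fˣ) (A : Matrix (Fin n) (Fin n) F), A ∈ U →
      Matrix.diagonal (fun i => (d i : F)) * A * Matrix.diagonal (fun i => ((d i)⁻¹ : F)) ∈ U := by
  refine ⟨fun ⟨J, _, hU⟩ => hU ▸ torusStable_UJ J, fun hT => ?_⟩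
  obtain ⟨S, rfl⟩ : ∃ S : Submonoid (Matrix (Fin n) (Fin n) F), (S : Set _) = U :=
    ⟨⟨⟨U, fun ha hb => hmul _ ha _ hb⟩, h1⟩, rfl⟩
  obtain ⟨c, hc⟩ := exists_units_ne_one hq
  refine ⟨rootPairs (S : Set (Matrix (Fin n) (Fin n) F)), closed_rootPairs,
    subset_antisymm ?_ ?_⟩
  · exact subset_UJ_rootPairs hsub hinv hT hc
  · exact UJ_subset_of_forall_xelt_mem closed_rootPairs.1 fun p hp => (mem_rootPairs.mp hp).2

theorem stmt0 {F : Type*} [Field F] [Fintype F] [DecidableEq F] {n : ℕ}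
    (hq : 3 ≤ Fintype.card F)
    (U : Set (Matrix (Fin n) (Fin n) F))
    (hsub : U ⊆ UJ (Jfull n))
    (h1 : (1 : Matrix (Fin n) (Fin n) F) ∈ U)
    (hmul : ∀ A ∈ U, ∀ B ∈ U, A * B ∈ U)
    (hinv : ∀ A ∈ U, ∃ B ∈ U, A * B = 1) :
    (∃ J : Finset (Pr n), Closed J ∧ U = UJ J) ↔
    ∀ (d : Fin n → Fˣ) (A : Matrix (Fin n) (Fin n) F), A ∈ U →
      Matrix.diagonal (fun i => (d i : F)) * A * Matrix.diagonal (fun i => ((d i)⁻¹ : F)) ∈ U :=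
  stmt0_general hq U hsub h1 hmul hinv

end SCT
end

section
/- Let J be closed and φ ∈ J*. Then: (a) the right orbit {X_φ · x : x ∈ U_J} of X_φ in 𝔫_J has size q^{rank(M_φ^R)}; (b) the left orbit {x · X_φ : x ∈ U_J} has size q^{rank(M_φ^L)}. -/
open Matrix BigOperators

namespace SCT

variable {F : Type*} [Field F] [Fintype F] [DecidableEq F] {n : ℕ}

/-!
Every `u ∈ U_J` is `1 + X_Z` for a unique `Z ∈ J*`. Because `J` is closed, the product `X_φ X_Z`
is again supported on `J`, with coefficients `M_φ^R Z`; likewise `X_Z X_φ = X_{M_φ^L Z}`. Hence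
the right orbit is the translate `X_φ + X(im M_φ^R)` of the image of a subspace of dimension
`rank M_φ^R` under the injective linear map `Z ↦ X_Z`, and similarly for the left orbit.
-/

section RightLeftOrbits

variable {F : Type*} [Field F] {n : ℕ}

/-- `Z ↦ X_Z`, for `Z ∈ J*` given as a function on the subtype `J`. -/
def Xlin (J : Finset (Pr n)) : ({p // p ∈ J} → F) →ₗ[F] Matrix (Fin n) (Fin n) F where
  toFun Z := Matrix.of fun i j => if h : (i, j) ∈ J then Z ⟨(i, j), h⟩ else 0
  map_add' Y Z := by ext i j; by_cases h : (i, j) ∈ J <;> simp [h]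
  map_smul' c Z := by ext i j; by_cases h : (i, j) ∈ J <;> simp [h]

lemma Xlin_apply_of_mem {J : Finset (Pr n)} (Z : {p // p ∈ J} → F) {i j : Fin n}
    (h : (i, j) ∈ J) : Xlin J Z i j = Z ⟨(i, j), h⟩ := dif_pos h

lemma Xlin_apply_of_notMem {J : Finset (Pr n)} (Z : {p // p ∈ J} → F) {i j : Fin n}
    (h : (i, j) ∉ J) : Xlin J Z i j = 0 := dif_neg h

lemma Xlin_injective (J : Finset (Pr n)) : Function.Injective (Xlin (F := F) J) := by
  intro Y Z h
  funext ⟨⟨i, j⟩, hij⟩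
  simpa [Xlin_apply_of_mem _ hij] using congrFun (congrFun h i) j

lemma mem_UJ_iff {J : Finset (Pr n)} (hJ : ∀ p ∈ J, p.1 < p.2) (u : Matrix (Fin n) (Fin n) F) :
    u ∈ UJ J ↔ ∃ Z : {p // p ∈ J} → F, u = 1 + Xlin J Z := by
  have hdiag : ∀ i, (i, i) ∉ J := fun i h => lt_irrefl i (hJ _ h)
  constructor
  · rintro ⟨hone, hzero⟩
    refine ⟨fun p => u p.1.1 p.1.2, Matrix.ext fun i j => ?_⟩
    by_cases hij : i = j
    · subst hij
      simp [Xlin_apply_of_notMem _ (hdiag i), hone]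
    by_cases h : (i, j) ∈ J
    · simp [Xlin_apply_of_mem _ h, Matrix.one_apply_ne hij]
    · simp [Xlin_apply_of_notMem _ h, Matrix.one_apply_ne hij, hzero i j hij h]
  · rintro ⟨Z, rfl⟩
    refine ⟨fun i => by simp [Xlin_apply_of_notMem _ (hdiag i)], fun i j hij h => ?_⟩
    simp [Xlin_apply_of_notMem _ h, Matrix.one_apply_ne hij]

lemma Xmat_mul_Xlin {J : Finset (Pr n)} (hJ : ∀ i j k, (i, j) ∈ J → (j, k) ∈ J → (i, k) ∈ J)
    (φ : Pr n → F) (Z : {p // p ∈ J} → F) :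
    Xmat J φ * Xlin J Z = Xlin J (MphiR J φ *ᵥ Z) := by
  ext i l
  by_cases hil : (i, l) ∈ J
  · rw [Xlin_apply_of_mem _ hil, Matrix.mul_apply, mulVec, dotProduct]
    -- both sides are sums over the `j` with `(j, l) ∈ J`
    let e : {j // (j, l) ∈ J} → {p // p ∈ J} := fun j => ⟨(j.1, l), j.2⟩
    have he : Function.Injective e := fun j j' h => Subtype.ext (congrArg (·.1.1) h)
    have hlhs := Fintype.sum_of_injective Subtype.val Subtype.val_injective
      (fun j : {j // (j, l) ∈ J} => Xmat J φ i j * Xlin J Z j l)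
      (fun j => Xmat J φ i j * Xlin J Z j l)
      (fun j hj => by simp [Xlin_apply_of_notMem _ fun h => hj ⟨⟨j, h⟩, rfl⟩]) fun _ => rfl
    have hrhs := Fintype.sum_of_injective e he (fun j => MphiR J φ ⟨(i, l), hil⟩ (e j) * Z (e j))
      (fun q => MphiR J φ ⟨(i, l), hil⟩ q * Z q)
      (fun ⟨⟨j, k⟩, hjk⟩ hq => by
        have hkl : k ≠ l := fun hkl => hq ⟨⟨j, hkl ▸ hjk⟩, by simp [e, hkl]⟩
        simp [MphiR, hkl]) fun _ => rfl
    rw [← hlhs, ← hrhs]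
    refine Fintype.sum_congr _ _ fun j => ?_
    simp [e, MphiR, Xmat, Xlin_apply_of_mem _ j.2, j.2]
  · rw [Xlin_apply_of_notMem _ hil, Matrix.mul_apply]
    refine Finset.sum_eq_zero fun j _ => ?_
    by_cases hij : (i, j) ∈ J
    · simp [Xlin_apply_of_notMem _ fun hjl => hil (hJ i j l hij hjl)]
    · simp [Xmat, hij]

lemma Xlin_mul_Xmat {J : Finset (Pr n)} (hJ : ∀ i j k, (i, j) ∈ J → (j, k) ∈ J → (i, k) ∈ J)
    (φ : Pr n → F) (Z : {p // p ∈ J} → F) :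
    Xlin J Z * Xmat J φ = Xlin J (MphiL J φ *ᵥ Z) := by
  ext i l
  by_cases hil : (i, l) ∈ J
  · rw [Xlin_apply_of_mem _ hil, Matrix.mul_apply, mulVec, dotProduct]
    -- both sides are sums over the `k` with `(i, k) ∈ J`
    let e : {k // (i, k) ∈ J} → {p // p ∈ J} := fun k => ⟨(i, k.1), k.2⟩
    have he : Function.Injective e := fun k k' h => Subtype.ext (congrArg (·.1.2) h)
    have hlhs := Fintype.sum_of_injective Subtype.val Subtype.val_injective
      (fun k : {k // (i, k) ∈ J} => Xlin J Z i k * Xmat J φ k l)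
      (fun k => Xlin J Z i k * Xmat J φ k l)
      (fun k hk => by simp [Xlin_apply_of_notMem _ fun h => hk ⟨⟨k, h⟩, rfl⟩]) fun _ => rfl
    have hrhs := Fintype.sum_of_injective e he (fun k => MphiL J φ ⟨(i, l), hil⟩ (e k) * Z (e k))
      (fun q => MphiL J φ ⟨(i, l), hil⟩ q * Z q)
      (fun ⟨⟨j, k⟩, hjk⟩ hq => by
        have hji : j ≠ i := fun hji => hq ⟨⟨k, hji ▸ hjk⟩, by simp [e, hji]⟩
        simp [MphiL, hji]) fun _ => rfl
    rw [← hlhs, ← hrhs]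
    refine Fintype.sum_congr _ _ fun k => ?_
    simp [e, MphiL, Xmat, Xlin_apply_of_mem _ k.2, k.2, mul_comm]
  · rw [Xlin_apply_of_notMem _ hil, Matrix.mul_apply]
    refine Finset.sum_eq_zero fun k _ => ?_
    by_cases hik : (i, k) ∈ J
    · simp [Xmat, show (k, l) ∉ J from fun hkl => hil (hJ i k l hik hkl)]
    · simp [Xlin_apply_of_notMem _ hik]

lemma natCard_range_add_Xlin_mulVec [Fintype F] {J : Finset (Pr n)} {ι : Type*} [Fintype ι]
    (c : Matrix (Fin n) (Fin n) F) (M : Matrix {p // p ∈ J} ι F) :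
    Nat.card (Set.range fun Z : ι → F => c + Xlin J (M *ᵥ Z)) = Fintype.card F ^ M.rank := by
  classical
  have hrange : (Set.range fun Z : ι → F => c + Xlin J (M *ᵥ Z)) =
      (fun Y => c + Xlin J Y) '' (LinearMap.range M.mulVecLin : Set ({p // p ∈ J} → F)) := by
    ext Y
    simp
  have hinj : Function.Injective fun Y => c + Xlin J Y :=
    (add_right_injective c).comp (Xlin_injective J)
  rw [hrange, Nat.card_image_of_injective hinj, Nat.card_eq_fintype_card,
    Module.card_eq_pow_finrank (K := F), Matrix.rank]
  rfl

lemma UJ_eq_range {J : Finset (Pr n)} (hJ : ∀ p ∈ J, p.1 < p.2) :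
    UJ J = Set.range fun Z : {p // p ∈ J} → F => 1 + Xlin J Z := by
  ext u
  simp [mem_UJ_iff hJ, eq_comm]

lemma rightOrbit_Xmat_eq_range {J : Finset (Pr n)} (hJ : Closed J) (φ : Pr n → F) :
    {Y | ∃ u, u ∈ UJ J ∧ Y = Xmat J φ * u} =
      Set.range fun Z => Xmat J φ + Xlin J (MphiR J φ *ᵥ Z) := by
  simp only [UJ_eq_range hJ.1, Set.exists_range_iff, mul_add, mul_one, Xmat_mul_Xlin hJ.2]
  ext Y
  simp [eq_comm]

lemma leftOrbit_Xmat_eq_range {J : Finset (Pr n)} (hJ : Closed J) (φ : Pr n → F) :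
    {Y | ∃ u, u ∈ UJ J ∧ Y = u * Xmat J φ} =
      Set.range fun Z => Xmat J φ + Xlin J (MphiL J φ *ᵥ Z) := by
  simp only [UJ_eq_range hJ.1, Set.exists_range_iff, add_mul, one_mul, Xlin_mul_Xmat hJ.2]
  ext Y
  simp [eq_comm]

end RightLeftOrbits

theorem stmt6_general {F : Type*} [Field F] [Fintype F] {n : ℕ}
    (J : Finset (Pr n)) (hJ : Closed J) (φ : Pr n → F) :
    Nat.card {Y : Matrix (Fin n) (Fin n) F |
        ∃ u : Matrix (Fin n) (Fin n) F, u ∈ UJ J ∧ Y = Xmat J φ * u}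
      = Fintype.card F ^ (MphiR J φ).rank ∧
    Nat.card {Y : Matrix (Fin n) (Fin n) F |
        ∃ u : Matrix (Fin n) (Fin n) F, u ∈ UJ J ∧ Y = u * Xmat J φ}
      = Fintype.card F ^ (MphiL J φ).rank := by
  rw [rightOrbit_Xmat_eq_range hJ, leftOrbit_Xmat_eq_range hJ]
  exact ⟨natCard_range_add_Xlin_mulVec _ _, natCard_range_add_Xlin_mulVec _ _⟩

theorem stmt6 {F : Type*} [Field F] [Fintype F] [DecidableEq F] {n : ℕ}
    (J : Finset (Pr n)) (hJ : Closed J) (φ : Pr n → F) :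
    Nat.card {Y : Matrix (Fin n) (Fin n) F |
        ∃ u : Matrix (Fin n) (Fin n) F, u ∈ UJ J ∧ Y = Xmat J φ * u}
      = Fintype.card F ^ (MphiR J φ).rank ∧
    Nat.card {Y : Matrix (Fin n) (Fin n) F |
        ∃ u : Matrix (Fin n) (Fin n) F, u ∈ UJ J ∧ Y = u * Xmat J φ}
      = Fintype.card F ^ (MphiL J φ).rank :=
  stmt6_general J hJ φ

end SCT
end

section
/- Let J be closed and η, ρ ∈ J*. Then: (a) x_ρ⁻¹ · λ_η = λ_{η'} where η'_{jk} = η_{jk} + Σ_{(i,j,k)∈𝒫} ρ_{ij} η_{ik} for all (j,k) ∈ J; (b) λ_η · x_ρ⁻¹ = λ_{η'} where η'_{jk} = η_{jk} + Σ_{(j,k,l)∈𝒫} ρ_{kl} η_{jl} for all (j,k) ∈ J. -/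
open Matrix BigOperators

/-! On `𝔫_J` the functional `λ_η` is the trace pairing `X ↦ tr (Hᵀ X)` with `H` the matrix of
`η`, and this pairing is adjoint to multiplication: `tr (Hᵀ (x X)) = tr ((xᵀ H)ᵀ X)` and
`tr (Hᵀ (X x)) = tr ((H xᵀ)ᵀ X)`. So `η'` is read off the entries of `xᵀ H`, resp. `H xᵀ`, on `J`.
Closedness of `J` is what keeps `x X` and `X x` inside `𝔫_J`, where the pairing applies. -/

namespace SCT

variable {F : Type*} [Field F] {n : ℕ}

theorem Xmat_mem_nJset (J : Finset (Pr n)) (φ : Pr n → F) : Xmat J φ ∈ nJset J :=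
  fun _ _ h => if_neg h

theorem add_mem_nJset {J : Finset (Pr n)} {A B : Matrix (Fin n) (Fin n) F}
    (hA : A ∈ nJset J) (hB : B ∈ nJset J) : A + B ∈ nJset J := fun i j h => by
  rw [Matrix.add_apply, hA i j h, hB i j h, add_zero]

theorem mul_mem_nJset {J : Finset (Pr n)} (hJ : Closed J) {A B : Matrix (Fin n) (Fin n) F}
    (hA : A ∈ nJset J) (hB : B ∈ nJset J) : A * B ∈ nJset J := fun i k hik => by
  rw [mul_apply]
  refine Finset.sum_eq_zero fun j _ => ?_
  by_cases hij : (i, j) ∈ J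
  · rw [hB j k fun hjk => hik (hJ.2 i j k hij hjk), mul_zero]
  · rw [hA i j hij, zero_mul]

theorem lam_eq_trace_transpose_mul {J : Finset (Pr n)} {η : Pr n → F}
    {A M : Matrix (Fin n) (Fin n) F} (hA : ∀ p ∈ J, A p.1 p.2 = η p) (hM : M ∈ nJset J) :
    lam J η M = (Aᵀ * M).trace := by
  calc lam J η M = ∑ p ∈ J, A p.1 p.2 * M p.1 p.2 :=
        Finset.sum_congr rfl fun p hp => by rw [hA p hp]
    _ = ∑ p : Pr n, A p.1 p.2 * M p.1 p.2 :=
        Finset.sum_subset (Finset.subset_univ J) fun p _ hp => by rw [hM p.1 p.2 hp, mul_zero]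
    _ = (Aᵀ * M).trace := by
        rw [Fintype.sum_prod_type, Finset.sum_comm]
        simp only [trace, diag_apply, mul_apply, transpose_apply]

theorem lam_xmat_mul {J : Finset (Pr n)} (hJ : Closed J) (η ρ : Pr n → F)
    {M : Matrix (Fin n) (Fin n) F} (hM : M ∈ nJset J) :
    lam J η (xmat J ρ * M) =
      lam J (fun p => η p + ∑ i : Fin n,
        if (i, p.1) ∈ J ∧ (p.1, p.2) ∈ J then ρ (i, p.1) * η (i, p.2) else 0) M := by
  have hxM : xmat J ρ * M ∈ nJset J := by
    rw [xmat, add_mul, one_mul]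
    exact add_mem_nJset hM (mul_mem_nJset hJ (Xmat_mem_nJset J ρ) hM)
  rw [lam_eq_trace_transpose_mul (η := η) (A := of (Function.curry η)) (fun _ _ => rfl) hxM,
    lam_eq_trace_transpose_mul (A := (xmat J ρ)ᵀ * of (Function.curry η)) ?_ hM,
    transpose_mul, transpose_transpose, Matrix.mul_assoc]
  intro p hp
  simp [xmat, Xmat, mul_apply, add_mul, Finset.sum_add_distrib, one_apply, hp]

theorem lam_mul_xmat {J : Finset (Pr n)} (hJ : Closed J) (η ρ : Pr n → F)
    {M : Matrix (Fin n) (Fin n) F} (hM : M ∈ nJset J) :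
    lam J η (M * xmat J ρ) =
      lam J (fun p => η p + ∑ l : Fin n,
        if (p.1, p.2) ∈ J ∧ (p.2, l) ∈ J then ρ (p.2, l) * η (p.1, l) else 0) M := by
  have hMx : M * xmat J ρ ∈ nJset J := by
    rw [xmat, mul_add, mul_one]
    exact add_mem_nJset hM (mul_mem_nJset hJ hM (Xmat_mem_nJset J ρ))
  rw [lam_eq_trace_transpose_mul (η := η) (A := of (Function.curry η)) (fun _ _ => rfl) hMx,
    lam_eq_trace_transpose_mul (A := of (Function.curry η) * (xmat J ρ)ᵀ) ?_ hM,
    transpose_mul, transpose_transpose, ← Matrix.mul_assoc, trace_mul_cycle]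
  intro p hp
  simp [xmat, Xmat, mul_apply, mul_add, Finset.sum_add_distrib, one_apply, hp, mul_comm]

theorem stmt8_general {F : Type*} [Field F] {n : ℕ}
    (J : Finset (Pr n)) (hJ : Closed J) (η ρ : Pr n → F) :
    (∀ φ : Pr n → F,
      lam J η (xmat J ρ * Xmat J φ) =
      lam J (fun p => η p + ∑ i : Fin n,
          if (i, p.1) ∈ J ∧ (p.1, p.2) ∈ J then ρ (i, p.1) * η (i, p.2) else 0) (Xmat J φ)) ∧
    (∀ φ : Pr n → F,
      lam J η (Xmat J φ * xmat J ρ) =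
      lam J (fun p => η p + ∑ l : Fin n,
          if (p.1, p.2) ∈ J ∧ (p.2, l) ∈ J then ρ (p.2, l) * η (p.1, l) else 0) (Xmat J φ)) :=
  ⟨fun φ => lam_xmat_mul hJ η ρ (Xmat_mem_nJset J φ),
    fun φ => lam_mul_xmat hJ η ρ (Xmat_mem_nJset J φ)⟩

theorem stmt8 {F : Type*} [Field F] [Fintype F] [DecidableEq F] {n : ℕ}
    (J : Finset (Pr n)) (hJ : Closed J) (η ρ : Pr n → F) :
    (∀ φ : Pr n → F,
      lam J η (xmat J ρ * Xmat J φ) =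
      lam J (fun p => η p + ∑ i : Fin n,
          if (i, p.1) ∈ J ∧ (p.1, p.2) ∈ J then ρ (i, p.1) * η (i, p.2) else 0) (Xmat J φ)) ∧
    (∀ φ : Pr n → F,
      lam J η (Xmat J φ * xmat J ρ) =
      lam J (fun p => η p + ∑ l : Fin n,
          if (p.1, p.2) ∈ J ∧ (p.2, l) ∈ J then ρ (p.2, l) * η (p.1, l) else 0) (Xmat J φ)) :=
  stmt8_general J hJ η ρ

end SCT
end

section
/- Let J be closed and η ∈ J*. Then rank(M_L^η) = rank(M_R^η), so the corank of η is well defined. -/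
open Matrix BigOperators

namespace SCT

variable {F : Type*} [Field F] [Fintype F] [DecidableEq F] {n : ℕ}

theorem MetaR_eq_transpose_MetaL {F : Type*} [Field F] {n : ℕ}
    (J : Finset (Pr n)) (η : Pr n → F) : MetaR J η = (MetaL J η)ᵀ := by
  ext ⟨⟨j, k⟩, hjk⟩ ⟨⟨i, l⟩, hil⟩
  simp only [MetaR, MetaL, transpose_apply, of_apply]
  by_cases hki : i = k
  · subst hki
    simp [hjk, hil]
  · simp [hki, Ne.symm hki]

theorem stmt10_general {F : Type*} [Field F] {n : ℕ}
    (J : Finset (Pr n)) (η : Pr n → F) :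
    (MetaL J η).rank = (MetaR J η).rank := by
  rw [MetaR_eq_transpose_MetaL, rank_transpose]

theorem stmt10 {F : Type*} [Field F] [Fintype F] [DecidableEq F] {n : ℕ}
    (J : Finset (Pr n)) (hJ : Closed J) (η : Pr n → F) :
    (MetaL J η).rank = (MetaR J η).rank :=
  stmt10_general J η

end SCT
end
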